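/- Suppose 𝒪_K is a principal ideal domain, 𝒪 is half-factorial, and the spec-map is bijective. Then 𝒪·𝒪_K^× = 𝒪_K. -/

import Mathlib

open NumberField

set_option synthInstance.maxHeartbeats 1000000
set_option maxHeartbeats 1000000

variable {K : Type*} [Field K] [NumberField K]

/-- A subring `O ⊆ 𝓞 K` is an *order* in `K` if its field of fractions is `K`;
equivalently, every element of `𝓞 K` admits a nonzero integer multiple lying in `O`. -/
def Subring.IsOrder (O : Subring (𝓞 K)) : Prop :=
  ∀ x : 𝓞 K, ∃ n : ℤ, n ≠ 0 ∧ (n : 𝓞 K) * x ∈ O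

/-- The conductor `𝔣 = {x ∈ 𝓞 K : x • 𝓞 K ⊆ O}` of a subring `O ⊆ 𝓞 K`,
as an ideal of `𝓞 K`. -/
def conductorIdeal (O : Subring (𝓞 K)) : Ideal (𝓞 K) where
  carrier := {x : 𝓞 K | ∀ y : 𝓞 K, x * y ∈ O}
  add_mem' := by
    intro a b ha hb y
    simpa [add_mul] using O.add_mem (ha y) (hb y)
  zero_mem' := by
    intro y
    simpa using O.zero_mem
  smul_mem' := by
    intro c x hx y
    simpa [smul_eq_mul, mul_assoc, mul_comm, mul_left_comm] using hx (c * y)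

/-- A commutative ring is *half-factorial* if every nonzero nonunit is a product of
irreducible elements, and any two factorizations of a nonzero nonunit into irreducibles
have the same length. -/
def IsHalfFactorialRing (R : Type*) [CommRing R] : Prop :=
  (∀ a : R, a ≠ 0 → ¬ IsUnit a →
      ∃ l : Multiset R, (∀ b ∈ l, Irreducible b) ∧ l.prod = a) ∧
  (∀ a : R, a ≠ 0 → ¬ IsUnit a →
      ∀ l₁ l₂ : Multiset R, (∀ b ∈ l₁, Irreducible b) → (∀ b ∈ l₂, Irreducible b) →
        l₁.prod = a → l₂.prod = a → Multiset.card l₁ = Multiset.card l₂)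

/-- The spec-map `𝔓 ↦ 𝔓 ∩ 𝒪` is a bijection between the nonzero prime ideals of `𝓞 K`
and the nonzero prime ideals of `O`. -/
def SpecMapBijective (O : Subring (𝓞 K)) : Prop :=
  Set.BijOn (fun P : Ideal (𝓞 K) => P.comap O.subtype)
    {P : Ideal (𝓞 K) | P.IsPrime ∧ P ≠ ⊥} {p : Ideal O | p.IsPrime ∧ p ≠ ⊥}

/-- The localization `𝒪_𝔭` of `O` at a prime ideal `𝔭` of `O`, realized as a subring
of `K`. -/
def locO (O : Subring (𝓞 K)) (p : Ideal O) (hp : p.IsPrime) : Subring K where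
  carrier := {x : K | ∃ a s : O, s ∉ p ∧
    x * algebraMap (𝓞 K) K (s : 𝓞 K) = algebraMap (𝓞 K) K (a : 𝓞 K)}
  one_mem' := ⟨1, 1, fun h => hp.ne_top ((Ideal.eq_top_iff_one _).mpr h), by simp⟩
  zero_mem' := ⟨0, 1, fun h => hp.ne_top ((Ideal.eq_top_iff_one _).mpr h), by simp⟩
  mul_mem' := by
    rintro x y ⟨a, s, hs, hx⟩ ⟨b, t, ht, hy⟩
    refine ⟨a * b, s * t, fun h => ((hp.mem_or_mem h).elim hs ht), ?_⟩
    push_cast [map_mul]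
    calc x * y * (algebraMap (𝓞 K) K s * algebraMap (𝓞 K) K t)
        = (x * algebraMap (𝓞 K) K s) * (y * algebraMap (𝓞 K) K t) := by ring
      _ = _ := by rw [hx, hy]
  add_mem' := by
    rintro x y ⟨a, s, hs, hx⟩ ⟨b, t, ht, hy⟩
    refine ⟨a * t + b * s, s * t, fun h => ((hp.mem_or_mem h).elim hs ht), ?_⟩
    push_cast [map_mul, map_add]
    calc (x + y) * (algebraMap (𝓞 K) K s * algebraMap (𝓞 K) K t)
        = (x * algebraMap (𝓞 K) K s) * algebraMap (𝓞 K) K t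
          + (y * algebraMap (𝓞 K) K t) * algebraMap (𝓞 K) K s := by ring
      _ = _ := by rw [hx, hy]
  neg_mem' := by
    rintro x ⟨a, s, hs, hx⟩
    exact ⟨-a, s, hs, by push_cast [map_neg]; rw [neg_mul, hx]⟩

/-- The localization `(𝒪_K)_𝔭 = 𝒪_K · (𝒪 ∖ 𝔭)⁻¹` of `𝓞 K` at the prime ideal `𝔭` of `O`
(the integral closure of `𝒪_𝔭`), realized as a subring of `K`. -/
def locOK (O : Subring (𝓞 K)) (p : Ideal O) (hp : p.IsPrime) : Subring K where
  carrier := {x : K | ∃ (a : 𝓞 K) (s : O), s ∉ p ∧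
    x * algebraMap (𝓞 K) K (s : 𝓞 K) = algebraMap (𝓞 K) K a}
  one_mem' := ⟨1, 1, fun h => hp.ne_top ((Ideal.eq_top_iff_one _).mpr h), by simp⟩
  zero_mem' := ⟨0, 1, fun h => hp.ne_top ((Ideal.eq_top_iff_one _).mpr h), by simp⟩
  mul_mem' := by
    rintro x y ⟨a, s, hs, hx⟩ ⟨b, t, ht, hy⟩
    refine ⟨a * b, s * t, fun h => ((hp.mem_or_mem h).elim hs ht), ?_⟩
    push_cast [map_mul]
    calc x * y * (algebraMap (𝓞 K) K s * algebraMap (𝓞 K) K t)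
        = (x * algebraMap (𝓞 K) K s) * (y * algebraMap (𝓞 K) K t) := by ring
      _ = _ := by rw [hx, hy]
  add_mem' := by
    rintro x y ⟨a, s, hs, hx⟩ ⟨b, t, ht, hy⟩
    refine ⟨a * t + b * s, s * t, fun h => ((hp.mem_or_mem h).elim hs ht), ?_⟩
    push_cast [map_mul, map_add]
    calc (x + y) * (algebraMap (𝓞 K) K s * algebraMap (𝓞 K) K t)
        = (x * algebraMap (𝓞 K) K s) * algebraMap (𝓞 K) K t
          + (y * algebraMap (𝓞 K) K t) * algebraMap (𝓞 K) K s := by ring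
      _ = _ := by rw [hx, hy]
  neg_mem' := by
    rintro x ⟨a, s, hs, hx⟩
    exact ⟨-a, s, hs, by push_cast [map_neg]; rw [neg_mul, hx]⟩

lemma locO_le_locOK (O : Subring (𝓞 K)) (p : Ideal O) (hp : p.IsPrime) :
    locO O p hp ≤ locOK O p hp := by
  rintro x ⟨a, s, hs, hx⟩
  exact ⟨(a : 𝓞 K), s, hs, hx⟩

/-- The subring `O + I` of `𝓞 K`, for a subring `O` and an ideal `I` of `𝓞 K`. -/
def orderPlus (O : Subring (𝓞 K)) (I : Ideal (𝓞 K)) : Subring (𝓞 K) where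
  carrier := {x : 𝓞 K | ∃ a ∈ O, ∃ b ∈ I, x = a + b}
  one_mem' := ⟨1, O.one_mem, 0, I.zero_mem, by ring⟩
  zero_mem' := ⟨0, O.zero_mem, 0, I.zero_mem, by ring⟩
  mul_mem' := by
    rintro x y ⟨a, ha, b, hb, rfl⟩ ⟨c, hc, d, hd, rfl⟩
    refine ⟨a * c, O.mul_mem ha hc, a * d + b * c + b * d,
      I.add_mem (I.add_mem (I.mul_mem_left a hd) (I.mul_mem_right c hb)) (I.mul_mem_left b hd), by ring⟩
  add_mem' := by
    rintro x y ⟨a, ha, b, hb, rfl⟩ ⟨c, hc, d, hd, rfl⟩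
    exact ⟨a + c, O.add_mem ha hc, b + d, I.add_mem hb hd, by ring⟩
  neg_mem' := by
    rintro x ⟨a, ha, b, hb, rfl⟩
    exact ⟨-a, O.neg_mem ha, -b, I.neg_mem hb, by ring⟩

lemma le_orderPlus (O : Subring (𝓞 K)) (I : Ideal (𝓞 K)) : O ≤ orderPlus O I :=
  fun a ha => ⟨a, ha, 0, I.zero_mem, by ring⟩

/-- The order `ℤ + f·𝒪_K` in `K`. -/
def zOrder (f : ℕ) : Subring (𝓞 K) where
  carrier := {x : 𝓞 K | ∃ (a : ℤ) (b : 𝓞 K), x = (a : 𝓞 K) + (f : 𝓞 K) * b}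
  one_mem' := ⟨1, 0, by push_cast; ring⟩
  zero_mem' := ⟨0, 0, by push_cast; ring⟩
  mul_mem' := by
    rintro x y ⟨a, b, rfl⟩ ⟨c, d, rfl⟩
    exact ⟨a * c, (a : 𝓞 K) * d + (c : 𝓞 K) * b + (f : 𝓞 K) * b * d, by push_cast; ring⟩
  add_mem' := by
    rintro x y ⟨a, b, rfl⟩ ⟨c, d, rfl⟩
    exact ⟨a + c, b + d, by push_cast; ring⟩
  neg_mem' := by
    rintro x ⟨a, b, rfl⟩
    exact ⟨-a, -b, by push_cast; ring⟩

/-- The natural homomorphism `𝒪_K^× → (𝒪_K/𝔣)^×/(𝒪/𝔣)^×`: reduction modulo the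
conductor `𝔣`, followed by the quotient by (the image of) `(𝒪/𝔣)^×`. -/
noncomputable def unitClassMap (O : Subring (𝓞 K)) :
    (𝓞 K)ˣ →*
      ((𝓞 K ⧸ conductorIdeal O)ˣ ⧸
        (Units.map (Subring.map (Ideal.Quotient.mk (conductorIdeal O)) O).subtype.toMonoidHom).range) :=
  (QuotientGroup.mk' _).comp (Units.map (Ideal.Quotient.mk (conductorIdeal O)).toMonoidHom)

/-!
Fix `f ≠ 0` in the conductor, so that `f 𝒪_K ⊆ 𝒪`. Half-factoriality makes the factorization
length `ℓ` of `𝒪` additive, hence `w(x) = ℓ(f x) - ℓ(f)` is an additive function on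
`𝒪_K ∖ {0}` that agrees with `ℓ` on `𝒪`; being bounded below, it is nonnegative.

Every prime `p` of `𝒪_K` has `w(p) ≥ 1`. If `p ∤ f`, some power `p ^ t ≡ 1 mod f` is a nonunit
of `𝒪`. If `p ∣ f`, every `z = b g ∈ 𝔮 = p 𝒪_K ∩ 𝒪`, with `g` coprime to `f` and `b` built from
primes dividing `f`, has `b ^ t ≡ z ^ t mod f` in `𝒪` for `g ^ t ≡ 1 mod f`; so `z` is divisible by
a prime `τ ∣ f` of positive weight, and by prime avoidance `𝔮` lies in some `τ 𝒪_K ∩ 𝒪`. Both are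
maximal, so they coincide, and injectivity of the spec-map gives `p ~ τ`. Consequently only units
have weight `0`.

Finally `p` divides an irreducible factor `α` of `f p` in `𝒪`. Since `w(α) = ℓ(α) = 1`, the
cofactor `α / p` has weight `0`, so `p` is associated to `α ∈ 𝒪`; unique factorization in `𝒪_K`
does the rest.
-/

theorem Multiset.eq_zero_of_forall_irreducible_of_isUnit_prod {M : Type*} [CommMonoid M]
    {l : Multiset M} (hl : ∀ b ∈ l, Irreducible b) (hu : IsUnit l.prod) : l = 0 :=
  Multiset.eq_zero_of_forall_notMem fun b hb =>
    (hl b hb).not_isUnit (isUnit_of_dvd_unit (Multiset.dvd_prod hb) hu)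

open Classical in
/-- The length of a factorization of `a` into irreducibles (junk value `0` if there is none). -/
noncomputable def factorizationLength {M : Type*} [CommMonoid M] (a : M) : ℕ :=
  if h : ∃ l : Multiset M, (∀ b ∈ l, Irreducible b) ∧ l.prod = a then Multiset.card h.choose
  else 0

namespace IsHalfFactorialRing

variable {R : Type*} [CommRing R] (hhf : IsHalfFactorialRing R)
include hhf

theorem card_eq_factorizationLength {a : R} (ha : a ≠ 0) {l : Multiset R}
    (hl : ∀ b ∈ l, Irreducible b) (hla : Associated l.prod a) :
    Multiset.card l = factorizationLength a := by
  obtain ⟨u, rfl⟩ := hla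
  rcases Multiset.empty_or_exists_mem l with rfl | ⟨c, hc⟩
  · have hunit : IsUnit ((0 : Multiset R).prod * u) := by simp
    unfold factorizationLength
    split_ifs with h
    · rw [Multiset.eq_zero_of_forall_irreducible_of_isUnit_prod h.choose_spec.1
        (h.choose_spec.2.symm ▸ hunit), Multiset.card_zero]
    · rfl
  · obtain ⟨l, rfl⟩ := Multiset.exists_cons_of_mem hc
    -- absorbing the unit into one factor gives an honest factorization
    have hl' : ∀ b ∈ (c * u) ::ₘ l, Irreducible b := by
      simp only [Multiset.forall_mem_cons] at hl ⊢
      exact ⟨(irreducible_mul_isUnit u.isUnit).2 hl.1, hl.2⟩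
    have hprod : ((c * u) ::ₘ l).prod = (c ::ₘ l).prod * u := by
      simp only [Multiset.prod_cons]; ring
    have hnu : ¬IsUnit ((c ::ₘ l).prod * u) := fun h =>
      (hl c (Multiset.mem_cons_self c l)).not_isUnit
        (isUnit_of_dvd_unit (by simp [mul_assoc]) h)
    have hex : ∃ l' : Multiset R, (∀ b ∈ l', Irreducible b) ∧ l'.prod = (c ::ₘ l).prod * u :=
      ⟨_, hl', hprod⟩
    rw [factorizationLength, dif_pos hex, ← hhf.2 _ ha hnu _ _ hl' hex.choose_spec.1 hprod
      hex.choose_spec.2, Multiset.card_cons, Multiset.card_cons]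

theorem exists_factorization {a : R} (ha : a ≠ 0) :
    ∃ l : Multiset R, (∀ b ∈ l, Irreducible b) ∧ Associated l.prod a := by
  by_cases hu : IsUnit a
  · exact ⟨0, by simp, by simpa using (associated_one_iff_isUnit.2 hu).symm⟩
  · obtain ⟨l, hl, rfl⟩ := hhf.1 a ha hu
    exact ⟨l, hl, .refl _⟩

theorem factorizationLength_mul [IsDomain R] {a b : R} (ha : a ≠ 0) (hb : b ≠ 0) :
    factorizationLength (a * b) = factorizationLength a + factorizationLength b := by
  obtain ⟨l₁, hl₁, h₁⟩ := hhf.exists_factorization ha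
  obtain ⟨l₂, hl₂, h₂⟩ := hhf.exists_factorization hb
  have hl : ∀ c ∈ l₁ + l₂, Irreducible c := by
    simpa only [Multiset.mem_add, or_imp, forall_and] using And.intro hl₁ hl₂
  rw [← hhf.card_eq_factorizationLength ha hl₁ h₁, ← hhf.card_eq_factorizationLength hb hl₂ h₂,
    ← Multiset.card_add, hhf.card_eq_factorizationLength (mul_ne_zero ha hb) hl
      (by rw [Multiset.prod_add]; exact h₁.mul_mul h₂)]

theorem factorizationLength_pos {a : R} (ha : a ≠ 0) (hu : ¬IsUnit a) :
    0 < factorizationLength a := by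
  obtain ⟨l, hl, hla⟩ := hhf.exists_factorization ha
  rw [← hhf.card_eq_factorizationLength ha hl hla, Multiset.card_pos]
  rintro rfl
  exact hu (associated_one_iff_isUnit.1 (by simpa using hla.symm))

theorem factorizationLength_of_irreducible {a : R} (ha : Irreducible a) :
    factorizationLength a = 1 := by
  rw [← hhf.card_eq_factorizationLength ha.ne_zero (l := {a}) (by simpa using ha)
    (by simp), Multiset.card_singleton]

end IsHalfFactorialRing

section Weight

variable {R : Type*} [CommRing R] {O : Subring R} {f : R}

noncomputable def weight (hf : ∀ y, f * y ∈ O) (x : R) : ℤ :=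
  factorizationLength (⟨f * x, hf x⟩ : O) - factorizationLength (⟨f * 1, hf 1⟩ : O)

variable (hf : ∀ y, f * y ∈ O)

theorem weight_one : weight hf 1 = 0 := sub_self _

theorem neg_factorizationLength_le_weight (x : R) :
    -(factorizationLength (⟨f * 1, hf 1⟩ : O) : ℤ) ≤ weight hf x := by
  unfold weight
  omega

variable [IsDomain R] (hhf : IsHalfFactorialRing O) (hf0 : f ≠ 0)
include hhf hf0

theorem weight_mul {x y : R} (hx : x ≠ 0) (hy : y ≠ 0) :
    weight hf (x * y) = weight hf x + weight hf y := by
  have key : (⟨f * x, hf x⟩ : O) * ⟨f * y, hf y⟩ = ⟨f * 1, hf 1⟩ * ⟨f * (x * y), hf (x * y)⟩ :=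
    Subtype.ext (by push_cast; ring)
  have h := congrArg factorizationLength key
  rw [hhf.factorizationLength_mul (by simpa using mul_ne_zero hf0 hx)
      (by simpa using mul_ne_zero hf0 hy),
    hhf.factorizationLength_mul (by simpa using hf0)
      (by simpa using mul_ne_zero hf0 (mul_ne_zero hx hy))] at h
  unfold weight
  omega

theorem weight_of_mem {a : R} (ha : a ∈ O) (ha0 : a ≠ 0) :
    weight hf a = factorizationLength (⟨a, ha⟩ : O) := by
  have key : (⟨f * a, hf a⟩ : O) = ⟨f * 1, hf 1⟩ * ⟨a, ha⟩ := Subtype.ext (by push_cast; ring)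
  rw [weight, key, hhf.factorizationLength_mul
    (by simpa using hf0) (by simpa using ha0)]
  push_cast
  ring

theorem weight_pow {x : R} (hx : x ≠ 0) (n : ℕ) : weight hf (x ^ n) = n * weight hf x := by
  induction n with
  | zero => simp [weight_one]
  | succ n ih =>
    rw [pow_succ, weight_mul hf hhf hf0 (pow_ne_zero _ hx) hx, ih]
    push_cast
    ring

theorem weight_nonneg {x : R} (hx : x ≠ 0) : 0 ≤ weight hf x := by
  by_contra! h
  set m := factorizationLength (⟨f * 1, hf 1⟩ : O)
  have hpow := weight_pow hf hhf hf0 hx (m + 1)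
  have hge := neg_factorizationLength_le_weight hf (x ^ (m + 1))
  push_cast at hpow
  nlinarith

theorem weight_of_isUnit {x : R} (hu : IsUnit x) : weight hf x = 0 := by
  obtain ⟨u, rfl⟩ := hu
  have h := weight_mul hf hhf hf0 u.ne_zero u⁻¹.ne_zero
  rw [Units.mul_inv, weight_one] at h
  have := weight_nonneg hf hhf hf0 u.ne_zero
  have := weight_nonneg hf hhf hf0 u⁻¹.ne_zero
  omega

theorem weight_eq_of_associated {x y : R} (h : Associated x y) (hx : x ≠ 0) :
    weight hf x = weight hf y := by
  obtain ⟨u, rfl⟩ := h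
  rw [weight_mul hf hhf hf0 hx u.ne_zero, weight_of_isUnit hf hhf hf0 u.isUnit, add_zero]

theorem one_le_weight_of_mem {y : R} (hy : y ∈ O) (hy0 : y ≠ 0) (hu : ¬IsUnit y) :
    1 ≤ weight hf y := by
  rw [weight_of_mem hf hhf hf0 hy hy0]
  exact_mod_cast hhf.factorizationLength_pos (by simpa using hy0)
    fun h => hu (by simpa using h.map O.subtype)

end Weight

theorem exists_eq_unit_mul_mem_of_prime {R : Type*} [CommRing R] [IsDomain R]
    [UniqueFactorizationMonoid R] {O : Subring R} (h : ∀ p : R, Prime p → ∃ u : Rˣ, ↑u * p ∈ O)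
    (x : R) : ∃ (ε : Rˣ) (a : R), a ∈ O ∧ x = ε * a := by
  induction x using UniqueFactorizationMonoid.induction_on_prime with
  | h₁ => exact ⟨1, 0, O.zero_mem, by simp⟩
  | h₂ x hx => exact ⟨hx.unit, 1, O.one_mem, by simp⟩
  | h₃ a p _ hp ih =>
    obtain ⟨ε, b, hb, rfl⟩ := ih
    obtain ⟨u, hu⟩ := h p hp
    exact ⟨ε * u⁻¹, u * p * b, O.mul_mem hu hb, by
      simp only [Units.val_mul, mul_assoc, Units.inv_mul_cancel_left]; ring⟩

section UniqueFactorization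

variable {R : Type*} [CommRing R] [IsDomain R] [UniqueFactorizationMonoid R] {O : Subring R}
  {f : R} (hf : ∀ y, f * y ∈ O) (hhf : IsHalfFactorialRing O) (hf0 : f ≠ 0)
include hhf hf0

theorem exists_prime_dvd_one_le_weight {x : R} (hx : x ≠ 0) (h : 1 ≤ weight hf x) :
    ∃ σ, Prime σ ∧ σ ∣ x ∧ 1 ≤ weight hf σ := by
  induction x using UniqueFactorizationMonoid.induction_on_prime with
  | h₁ => exact absurd rfl hx
  | h₂ x hu => rw [weight_of_isUnit hf hhf hf0 hu] at h; omega
  | h₃ a p ha hp ih =>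
    rw [weight_mul hf hhf hf0 hp.ne_zero ha] at h
    by_cases hwp : 1 ≤ weight hf p
    · exact ⟨p, hp, dvd_mul_right p a, hwp⟩
    · obtain ⟨σ, hσ, hσa, hwσ⟩ := ih ha (by omega)
      exact ⟨σ, hσ, hσa.mul_left p, hwσ⟩

variable (hprime : ∀ p : R, Prime p → 1 ≤ weight hf p)
include hprime

theorem isUnit_of_weight_eq_zero {x : R} (hx : x ≠ 0) (h : weight hf x = 0) : IsUnit x := by
  by_contra hu
  obtain ⟨σ, hσ, z, rfl⟩ := WfDvdMonoid.exists_irreducible_factor hu hx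
  have hz : z ≠ 0 := right_ne_zero_of_mul hx
  rw [weight_mul hf hhf hf0 hσ.ne_zero hz] at h
  have := hprime σ (UniqueFactorizationMonoid.irreducible_iff_prime.1 hσ)
  have := weight_nonneg hf hhf hf0 hz
  omega

theorem exists_unit_mul_mem_of_prime {p : R} (hp : Prime p) : ∃ u : Rˣ, ↑u * p ∈ O := by
  obtain ⟨l, hl, hlp⟩ := hhf.1 ⟨f * p, hf p⟩ (by simpa using mul_ne_zero hf0 hp.ne_zero)
    fun h => hp.not_isUnit (isUnit_of_dvd_unit (dvd_mul_left p f) (by simpa using h.map O.subtype))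
  have hpl : p ∣ (l.map O.subtype).prod := by
    rw [← map_multiset_prod, hlp]
    exact dvd_mul_left p f
  obtain ⟨_, hαl, β, hαβ⟩ := hp.exists_mem_multiset_dvd hpl
  obtain ⟨α, hα, rfl⟩ := Multiset.mem_map.1 hαl
  rw [Subring.coe_subtype] at hαβ
  have hα0 : (α : R) ≠ 0 := by simpa using (hl α hα).ne_zero
  have hβ0 : β ≠ 0 := right_ne_zero_of_mul (hαβ ▸ hα0)
  have hwα : weight hf α = 1 := by
    rw [weight_of_mem hf hhf hf0 α.2 hα0, hhf.factorizationLength_of_irreducible (hl α hα),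
      Nat.cast_one]
  rw [hαβ, weight_mul hf hhf hf0 hp.ne_zero hβ0] at hwα
  have := hprime p hp
  have := weight_nonneg hf hhf hf0 hβ0
  obtain ⟨u, rfl⟩ := isUnit_of_weight_eq_zero hf hhf hf0 hprime hβ0 (by omega)
  exact ⟨u, by rw [mul_comm, ← hαβ]; exact α.2⟩

end UniqueFactorization

theorem exists_pos_dvd_pow_sub_one {R : Type*} [CommRing R] {f g : R}
    [Finite (R ⧸ Ideal.span {f})] (h : IsCoprime g f) : ∃ t, 0 < t ∧ f ∣ g ^ t - 1 := by
  have hg : IsUnit (Ideal.Quotient.mk (Ideal.span {f}) g) := by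
    obtain ⟨a, b, hab⟩ := h
    refine .of_mul_eq_one (Ideal.Quotient.mk _ a) ?_
    rw [← map_mul, ← map_one (Ideal.Quotient.mk _), Ideal.Quotient.eq, Ideal.mem_span_singleton]
    exact ⟨-b, by linear_combination hab⟩
  obtain ⟨t, ht, hgt⟩ := (isOfFinOrder_of_finite hg.unit).exists_pow_eq_one
  refine ⟨t, ht, Ideal.mem_span_singleton.1 (Ideal.Quotient.eq.1 ?_)⟩
  simpa [Units.ext_iff] using hgt

section PrincipalIdealRing

variable {R : Type*} [CommRing R] [IsDomain R] [IsPrincipalIdealRing R]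

theorem exists_eq_mul_coprime_part (f : R) {x : R} (hx : x ≠ 0) :
    ∃ b g, x = b * g ∧ IsCoprime g f ∧ ∀ σ, Prime σ → σ ∣ b → σ ∣ f := by
  induction x using UniqueFactorizationMonoid.induction_on_prime with
  | h₁ => exact absurd rfl hx
  | h₂ x hu =>
    exact ⟨x, 1, (mul_one x).symm, isCoprime_one_left, fun σ hσ hσx =>
      absurd (isUnit_of_dvd_unit hσx hu) hσ.not_isUnit⟩
  | h₃ a p ha hp ih =>
    obtain ⟨b, g, rfl, hg, hb⟩ := ih ha
    by_cases hpf : p ∣ f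
    · refine ⟨p * b, g, (mul_assoc _ _ _).symm, hg, fun σ hσ hσpb => ?_⟩
      rcases hσ.dvd_or_dvd hσpb with hσp | hσb
      exacts [hσp.trans hpf, hb σ hσ hσb]
    · exact ⟨b, p * g, mul_left_comm _ _ _,
        ((hp.coprime_iff_not_dvd).2 hpf).mul_left hg, hb⟩

variable {O : Subring R} {f : R} (hf : ∀ y, f * y ∈ O) (hhf : IsHalfFactorialRing O) (hf0 : f ≠ 0)
  [Finite (R ⧸ Ideal.span {f})]
include hhf hf0

theorem one_le_weight_of_not_dvd {p : R} (hp : Prime p) (hpf : ¬p ∣ f) : 1 ≤ weight hf p := by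
  obtain ⟨t, ht, c, hc⟩ := exists_pos_dvd_pow_sub_one ((hp.coprime_iff_not_dvd).2 hpf)
  have hmem : p ^ t ∈ O := by
    rw [← sub_add_cancel (p ^ t) 1, hc]
    exact O.add_mem (hf c) O.one_mem
  have h := one_le_weight_of_mem hf hhf hf0 hmem (pow_ne_zero t hp.ne_zero)
    fun hu => hp.not_isUnit ((isUnit_pow_iff ht.ne').1 hu)
  rw [weight_pow hf hhf hf0 hp.ne_zero] at h
  by_contra! hw
  nlinarith

theorem exists_prime_dvd_one_le_weight_of_mem {z p : R} (hz : z ∈ O) (hz0 : z ≠ 0)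
    (hp : Prime p) (hpz : p ∣ z) (hpf : p ∣ f) :
    ∃ σ, Prime σ ∧ σ ∣ f ∧ σ ∣ z ∧ 1 ≤ weight hf σ := by
  obtain ⟨b, g, rfl, hg, hb⟩ := exists_eq_mul_coprime_part f hz0
  obtain ⟨t, ht, c, hc⟩ := exists_pos_dvd_pow_sub_one hg
  have hmem : b ^ t ∈ O := by
    have : b ^ t = (b * g) ^ t - f * (c * b ^ t) := by linear_combination (-b ^ t) * hc
    rw [this]
    exact O.sub_mem (O.pow_mem hz t) (hf _)
  have hpb : p ∣ b := (hp.dvd_or_dvd hpz).resolve_right fun hpg =>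
    hp.not_isUnit (hg.isUnit_of_dvd' hpg hpf)
  have hb0 : b ≠ 0 := left_ne_zero_of_mul hz0
  obtain ⟨σ, hσ, hσb, hwσ⟩ := exists_prime_dvd_one_le_weight hf hhf hf0 (pow_ne_zero t hb0)
    (one_le_weight_of_mem hf hhf hf0 hmem (pow_ne_zero t hb0)
      fun hu => hp.not_isUnit (isUnit_of_dvd_unit (hpb.trans (dvd_pow_self b ht.ne')) hu))
  have hσb := hσ.dvd_of_dvd_pow hσb
  exact ⟨σ, hσ, hb σ hσ hσb, hσb.mul_right g, hwσ⟩

theorem exists_mem_factors_dvd_one_le_weight {z p : R} (hp : Prime p) (hpf : p ∣ f)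
    (hz : z ∈ O) (hpz : p ∣ z) :
    ∃ τ ∈ UniqueFactorizationMonoid.factors f, τ ∣ z ∧ 1 ≤ weight hf τ := by
  obtain ⟨σ, hσ, hσf, hσz, hwσ⟩ : ∃ σ, Prime σ ∧ σ ∣ f ∧ σ ∣ z ∧ 1 ≤ weight hf σ := by
    rcases eq_or_ne z 0 with rfl | hz0
    · obtain ⟨σ, hσ, hσf, -, hwσ⟩ := exists_prime_dvd_one_le_weight_of_mem hf hhf hf0
        (by simpa using hf 1) hf0 hp hpf hpf
      exact ⟨σ, hσ, hσf, dvd_zero σ, hwσ⟩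
    · exact exists_prime_dvd_one_le_weight_of_mem hf hhf hf0 hz hz0 hp hpz hpf
  obtain ⟨τ, hτ, hστ⟩ := UniqueFactorizationMonoid.exists_mem_factors_of_dvd hf0
    hσ.irreducible hσf
  exact ⟨τ, hτ, hστ.symm.dvd.trans hσz, weight_eq_of_associated hf hhf hf0 hστ hσ.ne_zero ▸ hwσ⟩

end PrincipalIdealRing

theorem Subring.IsOrder.conductorIdeal_ne_bot {O : Subring (𝓞 K)} (hO : O.IsOrder) :
    conductorIdeal O ≠ ⊥ := by
  classical
  obtain ⟨s, hs⟩ := Module.Finite.fg_top (R := ℤ) (M := 𝓞 K)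
  choose n hn0 hn using hO
  -- `N = ∏ n x` over a finite set of `ℤ`-module generators of `𝓞 K` works for all of them
  obtain ⟨N, hN⟩ : ∃ N, N = ∏ x ∈ s, n x := ⟨_, rfl⟩
  have hspan : Submodule.span ℤ (s : Set (𝓞 K)) ≤
      O.toAddSubgroup.toIntSubmodule.comap (LinearMap.mulLeft ℤ (N : 𝓞 K)) :=
    Submodule.span_le.2 fun x hx => by
      change (N : 𝓞 K) * x ∈ O
      rw [hN, ← Finset.mul_prod_erase s n hx, Int.cast_mul, mul_comm (n x : 𝓞 K), mul_assoc]
      exact O.mul_mem (intCast_mem O _) (hn x)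
  refine (Submodule.ne_bot_iff _).2 ⟨N, fun y => hspan (hs ▸ Submodule.mem_top), ?_⟩
  exact_mod_cast hN ▸ Finset.prod_ne_zero_iff.2 fun x _ => hn0 x

theorem Prime.span_singleton_mem_nonzeroPrimes {R : Type*} [CommRing R] {p : R} (hp : Prime p) :
    Ideal.span {p} ∈ {P : Ideal R | P.IsPrime ∧ P ≠ ⊥} :=
  ⟨(Ideal.span_singleton_prime hp.ne_zero).2 hp, by simpa using hp.ne_zero⟩

theorem one_le_weight_of_dvd [IsPrincipalIdealRing (𝓞 K)] {O : Subring (𝓞 K)} {f : 𝓞 K}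
    (hf : ∀ y, f * y ∈ O) (hhf : IsHalfFactorialRing O) (hf0 : f ≠ 0)
    [Finite (𝓞 K ⧸ Ideal.span {f})] (hspec : SpecMapBijective O) {p : 𝓞 K} (hp : Prime p)
    (hpf : p ∣ f) : 1 ≤ weight hf p := by
  classical
  let T : Set (𝓞 K) := {τ | τ ∈ UniqueFactorizationMonoid.factors f ∧ 1 ≤ weight hf τ}
  have hT : T.Finite := (UniqueFactorizationMonoid.factors f).toFinset.finite_toSet.subset
    fun τ hτ => Multiset.mem_toFinset.2 hτ.1
  have hcover : ((Ideal.span {p}).comap O.subtype : Set O) ⊆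
      ⋃ τ ∈ T, ((Ideal.span {τ}).comap O.subtype : Set O) := fun z hz => by
    obtain ⟨τ, hτ, hτz, hwτ⟩ := exists_mem_factors_dvd_one_le_weight hf hhf hf0 hp hpf z.2
      (Ideal.mem_span_singleton.1 hz)
    exact Set.mem_biUnion (x := τ) ⟨hτ, hwτ⟩ (Ideal.mem_span_singleton.2 hτz)
  obtain ⟨τ, ⟨hτ, hwτ⟩, hle⟩ := (Ideal.subset_union_prime_finite hT 0 0 fun τ hτ _ _ =>
    (UniqueFactorizationMonoid.prime_of_factor τ hτ.1).span_singleton_mem_nonzeroPrimes.1.comap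
      _).1 hcover
  have : Algebra.IsIntegral O (𝓞 K) := Algebra.IsIntegral.tower_top ℤ
  have hpmax := ((Ideal.span_singleton_prime hp.ne_zero).2 hp).isMaximal (by simpa using hp.ne_zero)
  have hτ' := (UniqueFactorizationMonoid.prime_of_factor τ hτ).span_singleton_mem_nonzeroPrimes
  have heq := (Ideal.isMaximal_comap_of_isIntegral_of_isMaximal (R := O) _).eq_of_le
    (hτ'.1.comap O.subtype).ne_top hle
  rw [weight_eq_of_associated hf hhf hf0 (Ideal.span_singleton_eq_span_singleton.1
    (hspec.injOn hp.span_singleton_mem_nonzeroPrimes hτ' heq)) hp.ne_zero]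
  exact hwτ

/-- If `𝒪_K` is a principal ideal domain, `𝒪` is half-factorial and the spec-map is
bijective, then `𝒪 · 𝒪_K^× = 𝒪_K`. -/
theorem units_mul_order_eq_ringOfIntegers (O : Subring (𝓞 K)) (hO : O.IsOrder)
    (hPID : IsPrincipalIdealRing (𝓞 K))
    (hhf : IsHalfFactorialRing O) (hspec : SpecMapBijective O) :
    ∀ x : 𝓞 K, ∃ (ε : (𝓞 K)ˣ) (a : 𝓞 K), a ∈ O ∧ x = ε * a := by
  obtain ⟨f, hf, hf0⟩ := Submodule.exists_mem_ne_zero_of_ne_bot hO.conductorIdeal_ne_bot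
  have := Ideal.finiteQuotientOfFreeOfNeBot (Ideal.span {f}) (by simpa using hf0)
  have hprime (p : 𝓞 K) (hp : Prime p) : 1 ≤ weight hf p := by
    by_cases hpf : p ∣ f
    · exact one_le_weight_of_dvd hf hhf hf0 hspec hp hpf
    · exact one_le_weight_of_not_dvd hf hhf hf0 hp hpf
  exact exists_eq_unit_mul_mem_of_prime fun p hp =>
    exists_unit_mul_mem_of_prime hf hhf hf0 hprime hp
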